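/- Let n > 1 and suppose a power series f(x) = x + Σ_{i≥2} a_i x^i over a ℚ-algebra has compositional inverse g(x) = Σ_{i≥1} b_i x^i. If the only nonzero coefficients a_i for i ≥ 2 are a_N and a_M with 2 ≤ N < M, then b_n = 0 unless n - 1 can be written as c(N-1) + c'(M-1) with nonnegative integers c, c', in which case b_n is given by the Lagrange inversion formula b_n = (1/n) Σ_{c(N-1)+c'(M-1)=n-1} (-1)^{c+c'} · (n(n+1)⋯(n-1+c+c'))/(c! c'!) · a_N^c a_M^{c'}. -/

import Mathlib

open PowerSeries

/-- Composition `g ∘ f` of power series, valid when `f` has zero constant term. -/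
noncomputable def psComp {R : Type*} [CommRing R] (g f : PowerSeries R) : PowerSeries R :=
  PowerSeries.mk fun k =>
    ∑ n ∈ Finset.range (k + 1), PowerSeries.coeff n g * PowerSeries.coeff k (f ^ n)

/-!
Write `f = X * P` with `P = 1 + u`, `u = a_N X^(N-1) + a_M X^(M-1)`, and let `Q = P⁻¹`.
Differentiating `g(f) = X` gives `∑ i b_i f^(i-1) f' = 1` up to order `n`. Multiplying by
`Q^n = X^n / f^n` and reading off the coefficient of `X^(n-1)`, every term with `i < n` is the
residue of `f' / f^(m+1)` for some `m ≥ 1`, which vanishes since that function is a derivative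
(this is where `ℚ ⊆ R` is used). Hence `n b_n = [X^(n-1)] Q^n`. Finally
`Q^n = ∑_j C(n-1+j, j) (-u)^j`, and expanding `u^j` binomially gives the sum over `(c, c')`.
-/

open Finset

section Lagrange

variable {R : Type*} [CommRing R]

lemma coeff_pow_eq_zero_of_lt {a : R⟦X⟧} (ha : constantCoeff a = 0) {m j : ℕ} (hmj : m < j) :
    coeff m (a ^ j) = 0 :=
  X_pow_dvd_iff.mp (pow_dvd_pow_of_dvd (X_dvd_iff.mpr ha) j) m hmj

lemma X_pow_dvd_psComp_sub {f : R⟦X⟧} (hf : constantCoeff f = 0) (g : R⟦X⟧) (n : ℕ) :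
    X ^ (n + 1) ∣ psComp g f - ∑ i ∈ range (n + 1), coeff i g • f ^ i := by
  refine X_pow_dvd_iff.mpr fun j hj => ?_
  rw [map_sub, psComp, coeff_mk, map_sum, sub_eq_zero]
  simp only [coeff_smul, smul_eq_mul]
  refine sum_subset (range_subset_range.mpr (by omega)) fun i _ hi => ?_
  rw [coeff_pow_eq_zero_of_lt hf (by simpa using hi), mul_zero]

lemma X_pow_dvd_derivative {h : R⟦X⟧} {n : ℕ} (hdvd : X ^ (n + 1) ∣ h) :
    X ^ n ∣ d⁄dX R h := by
  refine X_pow_dvd_iff.mpr fun j hj => ?_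
  rw [coeff_derivative, X_pow_dvd_iff.mp hdvd (j + 1) (by omega), zero_mul]

lemma eq_algebraMap_one_div_mul_of_natCast_mul_eq [Algebra ℚ R] {n : ℕ} (hn : n ≠ 0) {x y : R}
    (h : (n : R) * x = y) : x = algebraMap ℚ R (1 / n) * y := by
  rw [← h, ← mul_assoc, ← map_natCast (algebraMap ℚ R), ← map_mul,
    one_div_mul_cancel (by exact_mod_cast hn), map_one, one_mul]

lemma X_mul_derivative_pow_sub {P Q : R⟦X⟧} (hPQ : P * Q = 1) (m : ℕ) :
    X * d⁄dX R (Q ^ (m + 1)) - ((m + 1 : ℕ) : R⟦X⟧) * Q ^ (m + 1) =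
      -(((m + 1 : ℕ) : R⟦X⟧) * (d⁄dX R (X * P) * Q ^ (m + 2))) := by
  have hQ' : P * d⁄dX R Q + Q * d⁄dX R P = 0 := by
    simpa [Derivation.leibniz, smul_eq_mul, add_comm] using congrArg (d⁄dX R) hPQ
  rw [derivative_pow, Derivation.leibniz, derivative_X, Nat.add_sub_cancel]
  simp only [smul_eq_mul]
  linear_combination (((m + 1 : ℕ) : R⟦X⟧) * Q ^ (m + 1) -
      ((m + 1 : ℕ) : R⟦X⟧) * X * Q ^ m * d⁄dX R Q) * hPQ +
    ((m + 1 : ℕ) : R⟦X⟧) * X * Q ^ (m + 1) * hQ'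

/-- For `f = X * P` this is the residue of `f' / f ^ (m + 1)`, which vanishes for `m ≠ 0`
because `f' / f ^ (m + 1)` is then the derivative of `-f ^ (-m) / m`. -/
theorem coeff_derivative_mul_pow_of_mul_eq_one [Algebra ℚ R] {P Q : R⟦X⟧} (hPQ : P * Q = 1)
    (m : ℕ) : coeff m (d⁄dX R (X * P) * Q ^ (m + 1)) = if m = 0 then 1 else 0 := by
  rcases m with _ | m
  · have h := congrArg constantCoeff hPQ
    rw [map_mul, map_one] at h
    rw [coeff_zero_eq_constantCoeff_apply, map_mul, pow_one, ← coeff_zero_eq_constantCoeff_apply,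
      coeff_derivative, coeff_succ_X_mul, coeff_zero_eq_constantCoeff_apply]
    simpa using h
  · have h := congrArg (coeff (m + 1)) (X_mul_derivative_pow_sub hPQ m)
    rw [map_sub, coeff_succ_X_mul, coeff_derivative, ← map_natCast C, coeff_C_mul, map_neg,
      coeff_C_mul] at h
    have h0 : ((m + 1 : ℕ) : R) * coeff (m + 1) (d⁄dX R (X * P) * Q ^ (m + 2)) = 0 := by
      push_cast at h ⊢
      linear_combination h
    simpa using eq_algebraMap_one_div_mul_of_natCast_mul_eq m.succ_ne_zero h0

lemma coeff_derivative_pow_mul_pow [Algebra ℚ R] {P Q : R⟦X⟧} (hPQ : P * Q = 1) {i n : ℕ}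
    (hin : i ≤ n) :
    coeff n (d⁄dX R ((X * P) ^ (i + 1)) * Q ^ (n + 1)) =
      if i = n then ((n + 1 : ℕ) : R) else 0 := by
  obtain ⟨r, rfl⟩ := Nat.exists_eq_add_of_le hin
  have h : d⁄dX R ((X * P) ^ (i + 1)) * Q ^ (i + r + 1) =
      C ((i + 1 : ℕ) : R) * (X ^ i * (d⁄dX R (X * P) * Q ^ (r + 1))) := by
    calc _ = C ((i + 1 : ℕ) : R) * (X ^ i * (P * Q) ^ i * (d⁄dX R (X * P) * Q ^ (r + 1))) := by
          rw [derivative_pow, map_natCast, Nat.add_sub_cancel]; ring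
      _ = _ := by rw [hPQ, one_pow, mul_one]
  rw [h, coeff_C_mul, coeff_X_pow_mul', if_pos (by omega), Nat.add_sub_cancel_left,
    coeff_derivative_mul_pow_of_mul_eq_one hPQ]
  rcases r with _ | r <;> simp

theorem lagrange_inversion [Algebra ℚ R] {P Q g : R⟦X⟧} (hPQ : P * Q = 1)
    (hgf : psComp g (X * P) = X) (n : ℕ) :
    ((n + 1 : ℕ) : R) * coeff (n + 1) g = coeff n (Q ^ (n + 1)) := by
  -- `T` is `g ∘ (X * P)` truncated, so it agrees with `X` to order `n + 1`.
  set T := ∑ i ∈ range (n + 2), coeff i g • (X * P) ^ i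
  have hT : X ^ (n + 1) ∣ d⁄dX R T - 1 := by
    have h := X_pow_dvd_psComp_sub (f := X * P) (by simp) g (n + 1)
    rw [hgf, ← dvd_neg, neg_sub] at h
    simpa only [map_sub, derivative_X] using X_pow_dvd_derivative h
  have hcoeff : coeff n (d⁄dX R T * Q ^ (n + 1)) = coeff n (Q ^ (n + 1)) := by
    rw [← sub_eq_zero, ← map_sub, ← sub_one_mul]
    exact X_pow_dvd_iff.mp (hT.mul_right _) n (by omega)
  calc ((n + 1 : ℕ) : R) * coeff (n + 1) g
      = ∑ i ∈ range (n + 2), coeff i g * coeff n (d⁄dX R ((X * P) ^ i) * Q ^ (n + 1)) := by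
        rw [sum_range_succ', sum_congr rfl fun i hi => by
          rw [coeff_derivative_pow_mul_pow hPQ (Nat.lt_succ_iff.mp (mem_range.mp hi))]]
        simp [mul_comm]
    _ = coeff n (d⁄dX R T * Q ^ (n + 1)) := by
        simp only [T, map_sum, sum_mul, Derivation.map_smul, smul_mul_assoc, coeff_smul,
          smul_eq_mul]
    _ = coeff n (Q ^ (n + 1)) := hcoeff

end Lagrange

section NegativeBinomial

variable {R : Type*} [CommRing R]

lemma coeff_subst_eq_sum_range {a : R⟦X⟧} (ha : constantCoeff a = 0) (F : R⟦X⟧) (m : ℕ) :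
    coeff m (F.subst a) = ∑ j ∈ range (m + 1), coeff j F * coeff m (a ^ j) := by
  rw [coeff_subst' (HasSubst.of_constantCoeff_zero' ha)]
  refine finsum_eq_sum_of_support_subset _ fun j hj => ?_
  by_contra hjm
  rw [Function.mem_support, coeff_pow_eq_zero_of_lt ha (by simpa using hjm), smul_zero] at hj
  exact hj rfl

lemma pow_succ_eq_subst_mk_choose {u Q : R⟦X⟧} (hu : constantCoeff u = 0)
    (hQ : (1 + u) * Q = 1) (d : ℕ) :
    Q ^ (d + 1) = (PowerSeries.mk fun j => ((d + j).choose d : R)).subst (-u) := by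
  have hs : HasSubst (-u) := HasSubst.of_constantCoeff_zero' (by simp [hu])
  have hinv : (PowerSeries.mk 1 : R⟦X⟧).subst (-u) = Q := by
    have h := congrArg (subst (-u)) (mk_one_mul_one_sub_eq_one R)
    rw [← coe_substAlgHom hs, map_mul, map_sub, map_one, coe_substAlgHom hs, subst_X hs,
      sub_neg_eq_add] at h
    calc _ = (PowerSeries.mk 1 : R⟦X⟧).subst (-u) * ((1 + u) * Q) := by rw [hQ, mul_one]
      _ = Q := by rw [← mul_assoc, h, one_mul]
  rw [← mk_one_pow_eq_mk_choose_add, subst_pow hs, hinv]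

lemma coeff_monomial_add_monomial_pow (a b : R) (e₁ e₂ j m : ℕ) :
    coeff m ((C a * X ^ e₁ + C b * X ^ e₂) ^ j) =
      ∑ p ∈ antidiagonal j,
        if p.1 * e₁ + p.2 * e₂ = m then (j.choose p.1 : R) * a ^ p.1 * b ^ p.2 else 0 := by
  rw [(Commute.all _ _).add_pow', map_sum]
  refine sum_congr rfl fun p _ => ?_
  have h : j.choose p.1 • ((C a * X ^ e₁) ^ p.1 * (C b * X ^ e₂) ^ p.2) =
      C ((j.choose p.1 : R) * a ^ p.1 * b ^ p.2) * X ^ (p.1 * e₁ + p.2 * e₂) := by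
    simp only [mul_pow, ← map_pow, ← pow_mul, nsmul_eq_mul, ← map_natCast C, map_mul, pow_add]
    ring
  rw [h, coeff_C_mul_X_pow]
  exact if_congr eq_comm rfl rfl

lemma sum_range_sum_antidiagonal_ite {M : Type*} [AddCommMonoid M] (m : ℕ)
    (S : ℕ × ℕ → Prop) [DecidablePred S] (hS : ∀ p, S p → p.1 + p.2 ≤ m) (F : ℕ × ℕ → M) :
    ∑ j ∈ range (m + 1), ∑ p ∈ antidiagonal j, (if S p then F p else 0) =
      ∑ p ∈ (range (m + 1) ×ˢ range (m + 1)).filter S, F p := by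
  rw [sum_sigma', ← sum_filter]
  refine sum_nbij' Sigma.snd (fun p => ⟨p.1 + p.2, p⟩) ?_ ?_ ?_ (fun _ _ => rfl) fun _ _ => rfl
  · rintro ⟨j, p⟩ hp
    simp only [mem_filter, mem_sigma, mem_range, HasAntidiagonal.mem_antidiagonal] at hp
    simp only [mem_filter, mem_product, mem_range]
    exact ⟨⟨by omega, by omega⟩, hp.2⟩
  · rintro p hp
    simp only [mem_filter, mem_product, mem_range] at hp
    simp only [mem_filter, mem_sigma, mem_range, HasAntidiagonal.mem_antidiagonal, and_true]
    exact ⟨Nat.lt_succ_of_le (hS p hp.2), hp.2⟩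
  · rintro ⟨j, p⟩ hp
    simp only [mem_filter, mem_sigma, HasAntidiagonal.mem_antidiagonal] at hp
    simp [hp.1.2]

theorem coeff_pow_of_one_add_monomial_add_monomial_mul_eq_one {a b : R} {e₁ e₂ : ℕ}
    (he₁ : 1 ≤ e₁) (he₂ : 1 ≤ e₂) {Q : R⟦X⟧} (hQ : (1 + (C a * X ^ e₁ + C b * X ^ e₂)) * Q = 1)
    (d m : ℕ) :
    coeff m (Q ^ (d + 1)) =
      ∑ p ∈ (range (m + 1) ×ˢ range (m + 1)).filter (fun p => p.1 * e₁ + p.2 * e₂ = m),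
        (-1) ^ (p.1 + p.2) * (((d + (p.1 + p.2)).choose d * (p.1 + p.2).choose p.1 : ℕ) : R) *
          a ^ p.1 * b ^ p.2 := by
  have hu : constantCoeff (C a * X ^ e₁ + C b * X ^ e₂) = 0 := by
    simp [zero_pow (Nat.one_le_iff_ne_zero.mp he₁), zero_pow (Nat.one_le_iff_ne_zero.mp he₂)]
  have hneg : -(C a * X ^ e₁ + C b * X ^ e₂) = C (-a) * X ^ e₁ + C (-b) * X ^ e₂ := by
    simp only [map_neg]; ring
  rw [pow_succ_eq_subst_mk_choose hu hQ,
    coeff_subst_eq_sum_range (by rw [map_neg, hu, neg_zero]), hneg]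
  simp only [coeff_mk, coeff_monomial_add_monomial_pow, mul_sum, mul_ite, mul_zero]
  rw [← sum_range_sum_antidiagonal_ite m _ (fun p hp => ?_)]
  · refine sum_congr rfl fun j _ => sum_congr rfl fun p hp => ?_
    rw [HasAntidiagonal.mem_antidiagonal] at hp
    subst hp
    split_ifs
    · push_cast
      rw [neg_pow, neg_pow b, pow_add]
      ring
    · rfl
  · calc p.1 + p.2 ≤ p.1 * e₁ + p.2 * e₂ := by
          gcongr <;> exact Nat.le_mul_of_pos_right _ ‹_›
      _ = m := hp

end NegativeBinomial

lemma prod_add_div_factorial_mul_factorial (d c c' : ℕ) :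
    (∏ t ∈ range (c + c'), (((d + 1 : ℕ) : ℚ) + t)) / (c.factorial * c'.factorial : ℚ) =
      ((d + (c + c')).choose d * (c + c').choose c : ℕ) := by
  have key : ∏ t ∈ range (c + c'), (d + 1 + t) =
      c.factorial * c'.factorial * ((d + (c + c')).choose d * (c + c').choose c) := by
    rw [← Nat.ascFactorial_eq_prod_range, Nat.ascFactorial_eq_factorial_mul_choose,
      ← Nat.add_choose_mul_factorial_mul_factorial c c', Nat.choose_symm_add,
      Nat.choose_symm_add (a := c)]
    ring
  rw [div_eq_iff (by positivity)]
  exact_mod_cast key.trans (mul_comm _ _)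

theorem stmt_6_general {R : Type*} [CommRing R] [Algebra ℚ R] (N M : ℕ)
    (hN : 2 ≤ N) (hNM : N < M) (aN aM : R) (f g : PowerSeries R)
    (hf : f = X + C aN * X ^ N + C aM * X ^ M)
    (hgf : psComp g f = X) :
    ∀ n : ℕ, 1 < n →
      PowerSeries.coeff n g =
        algebraMap ℚ R (1 / (n : ℚ)) *
          ∑ cc ∈ (Finset.range n ×ˢ Finset.range n).filter
              (fun cc => cc.1 * (N - 1) + cc.2 * (M - 1) = n - 1),
            algebraMap ℚ R ((-1 : ℚ) ^ (cc.1 + cc.2) *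
                (∏ t ∈ Finset.range (cc.1 + cc.2), ((n : ℚ) + t)) /
                  ((cc.1.factorial : ℚ) * (cc.2.factorial : ℚ))) *
              aN ^ cc.1 * aM ^ cc.2 := by
  intro n _
  obtain ⟨m, rfl⟩ : ∃ m, n = m + 1 := ⟨n - 1, by omega⟩
  set u := C aN * X ^ (N - 1) + C aM * X ^ (M - 1)
  have hfu : f = X * (1 + u) := by
    rw [hf, show N = N - 1 + 1 by omega, show M = M - 1 + 1 by omega]
    simp only [u]
    ring
  obtain ⟨Q, hQ⟩ : ∃ Q, (1 + u) * Q = 1 :=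
    (isUnit_iff_constantCoeff.mpr (by simp [u, show N - 1 ≠ 0 by omega,
      show M - 1 ≠ 0 by omega])).exists_right_inv
  have hlag := lagrange_inversion hQ (hfu ▸ hgf) m
  rw [coeff_pow_of_one_add_monomial_add_monomial_mul_eq_one (by omega) (by omega) hQ] at hlag
  rw [eq_algebraMap_one_div_mul_of_natCast_mul_eq m.succ_ne_zero hlag, Nat.add_sub_cancel]
  congr 1
  refine sum_congr rfl fun p _ => ?_
  rw [mul_div_assoc, prod_add_div_factorial_mul_factorial]
  simp

/-- Lagrange inversion for `f(x) = x + a_N x^N + a_M x^M` with `2 ≤ N < M` over a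
commutative `ℚ`-algebra: the compositional inverse `g(x) = Σ b_n x^n` satisfies, for
`n > 1`, `b_n = (1/n) Σ_{c(N-1)+c'(M-1) = n-1} (-1)^{c+c'}
(n(n+1)⋯(n-1+c+c'))/(c! c'!) a_N^c a_M^{c'}` (in particular `b_n = 0` when `n - 1` has
no such representation, the sum then being empty). -/
theorem stmt_6 {R : Type*} [CommRing R] [Algebra ℚ R] (N M : ℕ)
    (hN : 2 ≤ N) (hNM : N < M) (aN aM : R) (f g : PowerSeries R)
    (hf : f = X + C aN * X ^ N + C aM * X ^ M)
    (hg0 : constantCoeff g = 0)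
    (hgf : psComp g f = X) (hfg : psComp f g = X) :
    ∀ n : ℕ, 1 < n →
      PowerSeries.coeff n g =
        algebraMap ℚ R (1 / (n : ℚ)) *
          ∑ cc ∈ (Finset.range n ×ˢ Finset.range n).filter
              (fun cc => cc.1 * (N - 1) + cc.2 * (M - 1) = n - 1),
            algebraMap ℚ R ((-1 : ℚ) ^ (cc.1 + cc.2) *
                (∏ t ∈ Finset.range (cc.1 + cc.2), ((n : ℚ) + t)) /
                  ((cc.1.factorial : ℚ) * (cc.2.factorial : ℚ))) *
              aN ^ cc.1 * aM ^ cc.2 :=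
  stmt_6_general N M hN hNM aN aM f g hf hgf
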